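/- Let γ > 0 have infinite continued fraction expansion [a_0; a_1, a_2, …] with convergents p_i/q_i. If γ = √D for squarefree D > 1 and α_i = p_i + q_i√D, then |N(α_i)| = |p_i² − D q_i²| < 2√D / a_{i+1} + 1/(a_{i+1} q_i²). -/

import Mathlib

/-!
Factor `N(αᵢ) = (pᵢ - qᵢ√D)(pᵢ + qᵢ√D)`. The convergent error bound
`|√D - pᵢ/qᵢ| ≤ 1/(a_{i+1} qᵢ²)` is strict because `√D` is irrational, so the first factor is
smaller than `1/(a_{i+1} qᵢ)`, while the second is at most the first plus `2qᵢ√D`.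
-/

theorem Irrational.abs_sub_ratCast_ne {v : ℝ} (hv : Irrational v) (c r : ℚ) :
    |v - c| ≠ r := by
  intro h
  rcases eq_or_eq_neg_of_abs_eq h with h | h
  · exact hv.ne_rat (c + r) (by push_cast; linarith)
  · exact hv.ne_rat (c - r) (by push_cast; linarith)

theorem Irrational.sqrt_natCast_of_squarefree {D : ℕ} (hD : Squarefree D) (hD1 : 1 < D) :
    Irrational √D := by
  rw [irrational_sqrt_natCast_iff]
  rintro ⟨k, rfl⟩
  obtain rfl : k = 1 := Nat.isUnit_iff.mp (hD k dvd_rfl)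
  omega

theorem abs_sq_sub_sq_mul_sq_lt_of_abs_sub_div_lt {x p q b : ℝ} (hx : 0 ≤ x) (hq : 0 < q)
    (hb : 1 ≤ b) (h : |x - p / q| < 1 / (b * q * q)) :
    |p ^ 2 - x ^ 2 * q ^ 2| < 2 * x / b + 1 / (b * q ^ 2) := by
  have hdiff : |p - x * q| < 1 / (b * q) := by
    have : |p - x * q| = |x - p / q| * q := by
      rw [← abs_of_pos hq, ← abs_mul, abs_of_pos hq, ← abs_neg]
      congr 1
      field_simp
      ring
    calc |p - x * q| = |x - p / q| * q := this
      _ < 1 / (b * q * q) * q := by gcongr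
      _ = 1 / (b * q) := by field_simp
  have hsum : |p + x * q| ≤ |p - x * q| + 2 * x * q := by
    calc |p + x * q| = |(p - x * q) + 2 * x * q| := by congr 1; ring
      _ ≤ |p - x * q| + |2 * x * q| := abs_add_le _ _
      _ = |p - x * q| + 2 * x * q := by rw [abs_of_nonneg (a := 2 * x * q) (by positivity)]
  have hdiff' : |p - x * q| < 1 / q := hdiff.trans_le (by gcongr; nlinarith)
  calc |p ^ 2 - x ^ 2 * q ^ 2| = |p - x * q| * |p + x * q| := by rw [← abs_mul]; ring_nf
    _ ≤ |p - x * q| * (|p - x * q| + 2 * x * q) := by gcongr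
    _ < 1 / (b * q) * (1 / q + 2 * x * q) :=
        mul_lt_mul'' hdiff (by linarith) (abs_nonneg _) (by positivity)
    _ = 2 * x / b + 1 / (b * q ^ 2) := by field_simp; ring

namespace GenContFract

theorem one_le_of_den {K : Type*} [Field K] [LinearOrder K] [IsStrictOrderedRing K]
    [FloorRing K] (v : K) (n : ℕ) : 1 ≤ (GenContFract.of v).dens n := by
  rw [← zeroth_den_eq_one (g := GenContFract.of v)]
  exact monotone_nat_of_le_succ (f := fun k => (GenContFract.of v).dens k)
    (fun _ => of_den_mono (v := v)) n.zero_le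

theorem abs_sub_convs_lt_of_irrational {v : ℝ} (hv : Irrational v) {n : ℕ} {b : ℝ}
    (hb : (GenContFract.of v).partDens.get? n = some b) :
    |v - (GenContFract.of v).convs n| <
      1 / (b * (GenContFract.of v).dens n * (GenContFract.of v).dens n) := by
  refine (abs_sub_convergents_le' hb).lt_of_ne ?_
  obtain ⟨c, hc⟩ := exists_rat_eq_nth_conv (v := v) (n := n)
  obtain ⟨z, rfl⟩ := exists_int_eq_of_partDen hb
  obtain ⟨w, hw⟩ := exists_rat_eq_nth_den (v := v) (n := n)
  rw [hc, hw]
  exact_mod_cast hv.abs_sub_ratCast_ne c (1 / (z * w * w))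

end GenContFract

/-- If `p i / q i` are the convergents of `√D` and `a_{i+1}` is the `(i+1)`-st partial
quotient, then `|p i ^ 2 - D * q i ^ 2| < 2√D / a_{i+1} + 1 / (a_{i+1} * q i ^ 2)`. -/
theorem stmt6 (D : ℕ) (hD : Squarefree D) (hD1 : 1 < D) (i : ℕ) (b : ℝ)
    (hb : (GenContFract.of (Real.sqrt D)).partDens.get? i = some b) :
    |((GenContFract.of (Real.sqrt D)).nums i) ^ 2 -
        (D : ℝ) * ((GenContFract.of (Real.sqrt D)).dens i) ^ 2|
      < 2 * Real.sqrt D / b + 1 / (b * ((GenContFract.of (Real.sqrt D)).dens i) ^ 2) := by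
  have happrox := GenContFract.abs_sub_convs_lt_of_irrational
    (Irrational.sqrt_natCast_of_squarefree hD hD1) hb
  rw [GenContFract.conv_eq_num_div_den] at happrox
  have hq := zero_lt_one.trans_le (GenContFract.one_le_of_den (Real.sqrt D) i)
  have := abs_sq_sub_sq_mul_sq_lt_of_abs_sub_div_lt (Real.sqrt_nonneg D) hq
    (GenContFract.of_one_le_get?_partDen hb) happrox
  rwa [Real.sq_sqrt (Nat.cast_nonneg D)] at this
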